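/- arXiv:1311.4925 — 4 statements merged into one kernel-verified Lean document; each statement's English description precedes it below -/
import Mathlib

section
/- (Ajtai–Komlós–Szemerédi.) Let G be a finite triangle-free graph with maximum degree at most Δ, where Δ ≥ 1. Then α(G) ≥ (|V(G)| / (8Δ)) · log₂ Δ. -/
/-- A finset of vertices is independent in `G` if no two of its elements are adjacent. -/
def IsIndepSet {α : Type*} (G : SimpleGraph α) (s : Finset α) : Prop :=
  ∀ u ∈ s, ∀ v ∈ s, ¬ G.Adj u v

/-- The independence number of a graph: the maximum size of an independent set. -/
noncomputable def indepNum {α : Type*} (G : SimpleGraph α) : ℕ :=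
  sSup {m | ∃ s : Finset α, IsIndepSet G s ∧ s.card = m}

open Finset Real

/-!
Let `I` range over the independent sets of `G` and put `X_v(I) = Δ·[v ∈ I] + |N(v) ∩ I|`.
Fix `v` and group the independent sets by their residue `J = I \ N[v]`: the group of `J` consists
of `J ∪ {v}` and of the sets `J ∪ S` with `S ⊆ A`, where `A` is the set of neighbours of `v` that
have no neighbour in `J` (every such `S` is independent because `G` is triangle-free). With
`a = |A|` the mean of `X_v` over the group is `(Δ + a 2^(a-1)) / (2^a + 1) ≥ (log₂ Δ) / 4`.
On the other hand `∑_v X_v(I) ≤ 2Δ|I|` since all degrees are at most `Δ`, so the mean of `|I|`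
is at least `|V| log₂ Δ / (8Δ)`.
-/

theorem Real.logb_two_le_two_mul_sqrt {x : ℝ} (hx : 1 ≤ x) : logb 2 x ≤ 2 * √x := by
  set t := √√x
  have ht : 1 ≤ t := one_le_sqrt.mpr (one_le_sqrt.mpr hx)
  have hlog : log x = 4 * log t := by
    rw [log_sqrt (sqrt_nonneg x), log_sqrt (by linarith)]; ring
  have hsq : t ^ 2 = √x := sq_sqrt (sqrt_nonneg x)
  have hlog_le : log t ≤ t - 1 := log_le_sub_one_of_pos (by linarith)
  -- `4 (t - 1) ≤ 2 (log 2) t²` since `log 2 > 1/2`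
  rw [logb, div_le_iff₀ (log_pos one_lt_two), hlog, ← hsq]
  nlinarith [log_two_gt_d9, sq_nonneg (t - 2)]

theorem two_pow_add_one_mul_logb_le {x : ℝ} (hx : 1 ≤ x) (a : ℕ) :
    (2 ^ a + 1) * logb 2 x ≤ 4 * x + 2 * a * 2 ^ a := by
  set L := logb 2 x
  have hL_sqrt : L ≤ 2 * √x := logb_two_le_two_mul_sqrt hx
  have hsqrt : √x ≤ x := sqrt_le_self_iff.mpr (Or.inr hx)
  have hL_pow : 2 ^ a * L ≤ 2 * a * 2 ^ a + 2 * x := by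
    rcases le_or_gt L (2 * a) with hLa | haL
    · nlinarith [pow_pos (two_pos (α := ℝ)) a, sqrt_nonneg x]
    · have hpow : (2 : ℝ) ^ a < √x := by
        rw [lt_sqrt (by positivity), ← pow_mul, ← rpow_natCast,
          ← lt_logb_iff_rpow_lt one_lt_two (by linarith)]
        push_cast; linarith
      nlinarith [sq_sqrt (show 0 ≤ x by linarith), logb_nonneg one_lt_two hx]
  nlinarith

theorem Finset.two_mul_sum_card_powerset {β : Type*} (A : Finset β) :
    2 * ∑ S ∈ A.powerset, #S = #A * 2 ^ #A := by
  have h := sum_powerset_apply_card (fun m => m) (x := A)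
  simp only [smul_eq_mul, mul_comm ((#A).choose _), Nat.sum_range_mul_choose] at h
  rw [h]
  rcases Nat.eq_zero_or_pos #A with h | h
  · simp [h]
  · rw [← Nat.sub_add_cancel h, pow_succ]; simp only [Nat.add_sub_cancel]; ring

namespace IsIndepSet

variable {α : Type*} {G : SimpleGraph α}

theorem mono {s t : Finset α} (ht : IsIndepSet G t) (hst : s ⊆ t) : IsIndepSet G s :=
  fun u hu w hw => ht u (hst hu) w (hst hw)

theorem card_le_indepNum [Finite α] {s : Finset α} (hs : IsIndepSet G s) : #s ≤ indepNum G := by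
  have : Fintype α := Fintype.ofFinite α
  refine le_csSup ⟨Fintype.card α, ?_⟩ ⟨s, hs, rfl⟩
  rintro _ ⟨t, -, rfl⟩
  exact card_le_univ t

end IsIndepSet

section IndepSets

variable {α : Type*} [Fintype α] [DecidableEq α] (G : SimpleGraph α) [DecidableRel G.Adj]

instance : DecidablePred (IsIndepSet G) := fun s => by
  unfold IsIndepSet; infer_instance

def indepSets : Finset (Finset α) := {s | IsIndepSet G s}

variable {G}

@[simp] theorem mem_indepSets {s : Finset α} : s ∈ indepSets G ↔ IsIndepSet G s := by
  simp [indepSets]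

variable (G) in
def vertexWeight (Δ : ℕ) (v : α) (I : Finset α) : ℕ :=
  (if v ∈ I then Δ else 0) + #(I ∩ G.neighborFinset v)

theorem sum_card_inter_neighborFinset (I : Finset α) :
    ∑ v, #(I ∩ G.neighborFinset v) = ∑ u ∈ I, G.degree u := by
  have := sum_card_bipartiteAbove_eq_sum_card_bipartiteBelow (s := univ) (t := I) (r := G.Adj)
  convert this using 3 with v _ u
  · ext; simp [bipartiteAbove]
  · rw [← G.card_neighborFinset_eq_degree]; congr 1; ext; simp [bipartiteBelow, G.adj_comm]

theorem sum_vertexWeight_le {Δ : ℕ} (hdeg : ∀ v, G.degree v ≤ Δ) (I : Finset α) :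
    ∑ v, vertexWeight G Δ v I ≤ 2 * Δ * #I := by
  have hnbr : ∑ u ∈ I, G.degree u ≤ Δ * #I := by
    simpa [mul_comm] using sum_le_sum fun u (_ : u ∈ I) => hdeg u
  simp only [vertexWeight, sum_add_distrib, sum_ite_mem, univ_inter, sum_const, smul_eq_mul,
    sum_card_inter_neighborFinset]
  linarith

theorem indepSets_filter_sdiff_neighborFinset_eq {v : α} {J : Finset α} (htf : G.CliqueFree 3)
    (hJ : IsIndepSet G J) (hvJ : v ∉ J) (hJv : ∀ w ∈ J, ¬ G.Adj v w) :
    {I ∈ indepSets G | I \ insert v (G.neighborFinset v) = J} =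
      insert (insert v J)
        ({u ∈ G.neighborFinset v | ∀ w ∈ J, ¬ G.Adj u w}.powerset.image (J ∪ ·)) := by
  have hNindep := G.isIndepSet_neighborSet_of_triangleFree htf v
  ext I
  simp only [mem_filter, mem_indepSets, mem_insert, mem_image, mem_powerset, IsIndepSet,
    Finset.ext_iff, subset_iff, SimpleGraph.mem_neighborFinset, mem_sdiff, mem_union] at hJ ⊢
  constructor
  · rintro ⟨hI, hIJ⟩
    by_cases hv : v ∈ I
    · exact Or.inl (by grind)
    · exact Or.inr ⟨I ∩ G.neighborFinset v, by grind [SimpleGraph.mem_neighborFinset],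
        by grind [SimpleGraph.mem_neighborFinset]⟩
  · rintro (hI | ⟨S, hS, hI⟩)
    · grind [G.irrefl, G.adj_symm]
    · have hS' : ∀ u ∈ S, ∀ w ∈ S, ¬ G.Adj u w := fun u hu w hw huw =>
        hNindep (hS hu).1 (hS hw).1 huw.ne huw
      grind [G.adj_symm]

theorem union_inter_neighborFinset {v : α} {J S : Finset α} (hJv : ∀ w ∈ J, ¬ G.Adj v w)
    (hS : S ⊆ G.neighborFinset v) : (J ∪ S) ∩ G.neighborFinset v = S := by
  grind [SimpleGraph.mem_neighborFinset]

theorem card_indepSets_filter_sdiff_mul_logb_le {Δ : ℕ} (hΔ : 1 ≤ Δ) {v : α} {J : Finset α}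
    (htf : G.CliqueFree 3) (hJ : IsIndepSet G J) (hvJ : v ∉ J) (hJv : ∀ w ∈ J, ¬ G.Adj v w) :
    #{I ∈ indepSets G | I \ insert v (G.neighborFinset v) = J} * logb 2 Δ ≤
      4 * ∑ I ∈ indepSets G with I \ insert v (G.neighborFinset v) = J,
        (vertexWeight G Δ v I : ℝ) := by
  set A := {u ∈ G.neighborFinset v | ∀ w ∈ J, ¬ G.Adj u w}
  have hAN : A ⊆ G.neighborFinset v := filter_subset _ _
  have hinter : ∀ S ∈ A.powerset, (J ∪ S) ∩ G.neighborFinset v = S := fun S hS =>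
    union_inter_neighborFinset hJv ((mem_powerset.mp hS).trans hAN)
  have hvS : ∀ S ∈ A.powerset, v ∉ J ∪ S := fun S hS h => by
    grind [G.irrefl, SimpleGraph.mem_neighborFinset]
  have hinj : Set.InjOn (J ∪ ·) A.powerset := fun S hS T hT hST => by
    rw [← hinter S hS, ← hinter T hT]; exact congrArg (· ∩ _) hST
  have hnotMem : insert v J ∉ A.powerset.image (J ∪ ·) := by
    grind
  have hcard : #{I ∈ indepSets G | I \ insert v (G.neighborFinset v) = J} = 2 ^ #A + 1 := by
    rw [indepSets_filter_sdiff_neighborFinset_eq htf hJ hvJ hJv, card_insert_of_notMem hnotMem,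
      card_image_of_injOn hinj, card_powerset]
  have hsum : ∑ I ∈ indepSets G with I \ insert v (G.neighborFinset v) = J, vertexWeight G Δ v I =
      Δ + ∑ S ∈ A.powerset, #S := by
    rw [indepSets_filter_sdiff_neighborFinset_eq htf hJ hvJ hJv, sum_insert hnotMem,
      sum_image hinj]
    have hJN : J ∩ G.neighborFinset v = ∅ := by
      simpa using union_inter_neighborFinset hJv (empty_subset _)
    have hS : ∀ S ∈ A.powerset, vertexWeight G Δ v (J ∪ S) = #S := fun S hS => by
      simp [vertexWeight, hvS S hS, hinter S hS]
    rw [sum_congr rfl hS]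
    simp [vertexWeight, hJN]
  have key := two_pow_add_one_mul_logb_le (x := Δ) (by exact_mod_cast hΔ) #A
  have h2 := congrArg (Nat.cast (R := ℝ)) (two_mul_sum_card_powerset A)
  push_cast at h2
  rw [hcard, ← Nat.cast_sum, hsum]
  push_cast
  linarith

theorem card_indepSets_mul_logb_le {Δ : ℕ} (hΔ : 1 ≤ Δ) (htf : G.CliqueFree 3) (v : α) :
    #(indepSets G) * logb 2 Δ ≤ 4 * ∑ I ∈ indepSets G, (vertexWeight G Δ v I : ℝ) := by
  set residue := fun I : Finset α => I \ insert v (G.neighborFinset v)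
  have hmaps : ∀ I ∈ indepSets G, residue I ∈ (indepSets G).image residue :=
    fun I hI => mem_image_of_mem residue hI
  rw [card_eq_sum_card_fiberwise hmaps, ← sum_fiberwise_of_maps_to hmaps, Nat.cast_sum, sum_mul,
    mul_sum]
  refine sum_le_sum fun J hJ => ?_
  obtain ⟨I, hI, rfl⟩ := mem_image.mp hJ
  refine card_indepSets_filter_sdiff_mul_logb_le hΔ htf
    ((mem_indepSets.mp hI).mono sdiff_subset) ?_ ?_
  · simp [residue]
  · intro w hw
    simp only [residue, mem_sdiff, mem_insert, SimpleGraph.mem_neighborFinset] at hw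
    tauto

theorem exists_isIndepSet_card_mul_logb_le {Δ : ℕ} (hΔ : 1 ≤ Δ) (hdeg : ∀ v, G.degree v ≤ Δ)
    (htf : G.CliqueFree 3) :
    ∃ I, IsIndepSet G I ∧ Fintype.card α * logb 2 Δ ≤ 8 * Δ * #I := by
  have hne : (indepSets G).Nonempty := ⟨∅, by simp [IsIndepSet]⟩
  suffices ∑ _I ∈ indepSets G, Fintype.card α * logb 2 Δ ≤
      ∑ I ∈ indepSets G, ((8 * Δ * #I : ℕ) : ℝ) by
    obtain ⟨I, hI, hle⟩ := exists_le_of_sum_le hne this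
    exact ⟨I, mem_indepSets.mp hI, by exact_mod_cast hle⟩
  calc ∑ _I ∈ indepSets G, Fintype.card α * logb 2 Δ
      = ∑ _v : α, #(indepSets G) * logb 2 Δ := by
        simp only [sum_const, card_univ, nsmul_eq_mul]; ring
    _ ≤ ∑ v, 4 * ∑ I ∈ indepSets G, (vertexWeight G Δ v I : ℝ) :=
      sum_le_sum fun v _ => card_indepSets_mul_logb_le hΔ htf v
    _ = ∑ I ∈ indepSets G, ((4 * ∑ v, vertexWeight G Δ v I : ℕ) : ℝ) := by
      rw [← mul_sum, sum_comm, mul_sum]; push_cast; rfl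
    _ ≤ ∑ I ∈ indepSets G, ((8 * Δ * #I : ℕ) : ℝ) := by
      refine sum_le_sum fun I _ => Nat.cast_le.mpr ?_
      calc 4 * ∑ v, vertexWeight G Δ v I ≤ 4 * (2 * Δ * #I) := by
            grw [sum_vertexWeight_le hdeg I]
        _ = 8 * Δ * #I := by ring

end IndepSets

/-- Ajtai–Komlós–Szemerédi: a finite triangle-free graph with maximum degree at most
`Δ ≥ 1` satisfies `α(G) ≥ (|V(G)|/(8Δ)) · log₂ Δ`. -/
theorem aks_triangle_free {α : Type*} [Fintype α]
    (G : SimpleGraph α) [DecidableRel G.Adj] (Δ : ℕ) (hΔ : 1 ≤ Δ)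
    (hdeg : ∀ v : α, G.degree v ≤ Δ) (htf : G.CliqueFree 3) :
    (Fintype.card α : ℝ) / (8 * Δ) * Real.logb 2 Δ ≤ indepNum G := by
  classical
  obtain ⟨I, hI, hle⟩ := exists_isIndepSet_card_mul_logb_le hΔ hdeg htf
  have hI_le : (#I : ℝ) ≤ indepNum G := by exact_mod_cast hI.card_le_indepNum
  have hΔ_pos : (0 : ℝ) < 8 * Δ := by positivity
  rw [div_mul_eq_mul_div, div_le_iff₀ hΔ_pos]
  nlinarith
end

section
/- Fix n ≥ 1, a permutation σ ∈ S_n with d(id,σ) = s, and integers t, m, r with 0 ≤ m ≤ min(s,t), 0 ≤ r ≤ m, and t − m ≤ n − s. Then the number of permutations τ ∈ S_n such that d(id,τ) = t, |{i : σ(i) ≠ i and τ(i) ≠ i}| = m, and |{i : σ(i) ≠ i, τ(i) ≠ i, σ(i) = τ(i)}| = r is at most C(s,m)·C(m,r)·C(n−s, t−m)·(t−r)!. -/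
/-!
Record `τ` by `A = supp σ ∩ supp τ`, the subset `R ⊆ A` where `τ` agrees with `σ`, and
`B = supp τ \ supp σ`; there are at most `C(s,m)·C(m,r)·C(n-s,t-m)` such triples. The triple
fixes `supp τ = A ∪ B` and `τ` on `R`, so the rest of `τ` is a bijection from
`supp τ \ R` onto `supp τ \ σ(R)`, two sets of size `t - r`: at most `(t - r)!` choices.
-/

/-- The Hamming distance between two permutations: the number of positions where they differ. -/
def permHammingDist {n : ℕ} (σ τ : Equiv.Perm (Fin n)) : ℕ :=
  (Finset.univ.filter fun i => σ i ≠ τ i).card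

open Finset Equiv Nat

theorem permHammingDist_one_eq_card_support {n : ℕ} (τ : Perm (Fin n)) :
    permHammingDist 1 τ = #τ.support := by
  simp only [permHammingDist, Perm.support, Perm.one_apply, ne_comm]
  rfl

theorem card_sigma_powersetCard {α : Type*} (D : Finset α) (m r : ℕ) :
    #((D.powersetCard m).sigma fun A => A.powersetCard r) = (#D).choose m * m.choose r := by
  rw [card_sigma, sum_congr rfl fun A hA => by rw [card_powersetCard, (mem_powersetCard.1 hA).2],
    sum_const, card_powersetCard, smul_eq_mul]

section

variable {α : Type*} [Fintype α] [DecidableEq α]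

theorem card_perm_support_eq_agreeOn_le (σ : Perm α) {U R : Finset α} (hRU : R ⊆ U) :
    #{τ : Perm α | τ.support = U ∧ ∀ i ∈ R, τ i = σ i} ≤ (#U - #R)! := by
  set S : Finset (Perm α) := {τ | τ.support = U ∧ ∀ i ∈ R, τ i = σ i}
  obtain hS | ⟨τ₀, hτ₀⟩ := S.eq_empty_or_nonempty
  · simp [hS]
  have hσR : R.image σ ⊆ U := by
    obtain ⟨hτ₀U, hτ₀R⟩ := (mem_filter.1 hτ₀).2
    intro j hj
    obtain ⟨i, hi, rfl⟩ := mem_image.1 hj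
    rw [← hτ₀R i hi, ← hτ₀U]
    exact Perm.apply_mem_support.2 (hτ₀U ▸ hRU hi)
  set X := U \ R
  set Y := U \ R.image σ
  have hX : #X = #U - #R := card_sdiff_of_subset hRU
  have hY : #Y = #U - #R := by
    rw [card_sdiff_of_subset hσR, card_image_of_injective _ σ.injective]
  have hmaps : ∀ τ ∈ S, ∀ x ∈ X, τ x ∈ Y := by
    intro τ hτ x hx
    obtain ⟨hτU, hτR⟩ := (mem_filter.1 hτ).2
    obtain ⟨hxU, hxR⟩ := mem_sdiff.1 hx
    refine mem_sdiff.2 ⟨hτU ▸ Perm.apply_mem_support.2 (hτU ▸ hxU), fun hσ => hxR ?_⟩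
    obtain ⟨i, hi, hix⟩ := mem_image.1 hσ
    rwa [← τ.injective ((hτR i hi).trans hix)]
  let restrict (τ : S) : X ↪ Y := τ.1.toEmbedding.subtypeMap fun x hx => hmaps τ.1 τ.2 x hx
  have restrict_injective : Function.Injective restrict := by
    rintro ⟨τ, hτ⟩ ⟨τ', hτ'⟩ h
    obtain ⟨hτU, hτR⟩ := (mem_filter.1 hτ).2
    obtain ⟨hτ'U, hτ'R⟩ := (mem_filter.1 hτ').2
    ext i
    by_cases hiR : i ∈ R
    · rw [hτR i hiR, hτ'R i hiR]
    by_cases hiU : i ∈ U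
    · exact congrArg Subtype.val (DFunLike.congr_fun h ⟨i, mem_sdiff.2 ⟨hiU, hiR⟩⟩)
    · rw [Perm.notMem_support.1 (hτU ▸ hiU), Perm.notMem_support.1 (hτ'U ▸ hiU)]
  calc #S = Fintype.card S := (Fintype.card_coe S).symm
    _ ≤ Fintype.card (X ↪ Y) := Fintype.card_le_of_injective restrict restrict_injective
    _ = (#U - #R)! := by
      rw [Fintype.card_embedding_eq, Fintype.card_coe, Fintype.card_coe, hX, hY,
        descFactorial_self]

theorem card_perm_support_inter_le (σ : Perm α) (t m r : ℕ) :
    #{τ : Perm α | #τ.support = t ∧ #(σ.support ∩ τ.support) = m ∧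
        #{i ∈ σ.support ∩ τ.support | σ i = τ i} = r} ≤
      (#σ.support).choose m * m.choose r * (Fintype.card α - #σ.support).choose (t - m) *
        (t - r)! := by
  set S : Finset (Perm α) := {τ | #τ.support = t ∧ #(σ.support ∩ τ.support) = m ∧
    #{i ∈ σ.support ∩ τ.support | σ i = τ i} = r}
  set agree : Perm α → Finset α := fun τ => {i ∈ σ.support ∩ τ.support | σ i = τ i}
  set F : Perm α → (Σ _ : Finset α, Finset α) × Finset α := fun τ =>
    (⟨σ.support ∩ τ.support, agree τ⟩, τ.support \ σ.support)
  have hfiber : ∀ b ∈ S.image F, #{τ ∈ S | F τ = b} ≤ (t - r)! := by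
    intro b hb
    obtain ⟨τ₀, hτ₀, rfl⟩ := mem_image.1 hb
    obtain ⟨ht, -, hr⟩ := (mem_filter.1 hτ₀).2
    have hsub : {τ ∈ S | F τ = F τ₀} ⊆
        ({τ | τ.support = τ₀.support ∧ ∀ i ∈ agree τ₀, τ i = σ i} : Finset (Perm α)) := by
      intro τ hτ
      simp only [F, mem_filter, Prod.mk.injEq, Sigma.mk.injEq, heq_eq_eq] at hτ
      obtain ⟨-, ⟨hA, hR⟩, hB⟩ := hτ
      refine mem_filter.2 ⟨mem_univ _, ?_, fun i hi => ?_⟩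
      · rw [← sdiff_union_inter τ.support σ.support, ← sdiff_union_inter τ₀.support σ.support,
          inter_comm, hA, hB, inter_comm]
      · rw [← hR] at hi
        exact ((mem_filter.1 hi).2).symm
    calc #{τ ∈ S | F τ = F τ₀}
        ≤ #{τ : Perm α | τ.support = τ₀.support ∧ ∀ i ∈ agree τ₀, τ i = σ i} := card_le_card hsub
      _ ≤ (#τ₀.support - #(agree τ₀))! :=
          card_perm_support_eq_agreeOn_le σ (filter_subset _ _ |>.trans inter_subset_right)
      _ = (t - r)! := by rw [ht, hr]
  have himage : S.image F ⊆ ((σ.support.powersetCard m).sigma fun A => A.powersetCard r) ×ˢ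
      σ.supportᶜ.powersetCard (t - m) := by
    intro b hb
    obtain ⟨τ, hτ, rfl⟩ := mem_image.1 hb
    obtain ⟨ht, hm, hr⟩ := (mem_filter.1 hτ).2
    refine mem_product.2 ⟨mem_sigma.2 ⟨mem_powersetCard.2 ⟨inter_subset_left, hm⟩,
      mem_powersetCard.2 ⟨filter_subset _ _, hr⟩⟩, mem_powersetCard.2 ⟨?_, ?_⟩⟩
    · exact fun i hi => mem_compl.2 (mem_sdiff.1 hi).2
    · rw [card_sdiff, ht, hm]
  calc #S ≤ (t - r)! * #(S.image F) := card_le_mul_card_image S _ hfiber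
    _ ≤ (t - r)! * #(((σ.support.powersetCard m).sigma fun A => A.powersetCard r) ×ˢ
          σ.supportᶜ.powersetCard (t - m)) := by gcongr
    _ = _ := by
      rw [card_product, card_sigma_powersetCard, card_powersetCard, card_compl]
      ring

end

theorem count_tau_with_parameters_general (n : ℕ) (σ : Equiv.Perm (Fin n))
    (s t m r : ℕ) (hs : permHammingDist 1 σ = s) :
    (Finset.univ.filter fun τ : Equiv.Perm (Fin n) =>
        permHammingDist 1 τ = t ∧
        (Finset.univ.filter fun i => σ i ≠ i ∧ τ i ≠ i).card = m ∧
        (Finset.univ.filter fun i => σ i ≠ i ∧ τ i ≠ i ∧ σ i = τ i).card = r).card ≤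
      Nat.choose s m * Nat.choose m r * Nat.choose (n - s) (t - m) *
        Nat.factorial (t - r) := by
  rw [permHammingDist_one_eq_card_support] at hs
  subst hs
  convert card_perm_support_inter_le σ t m r using 1
  · congr! 3 with τ
    rw [permHammingDist_one_eq_card_support]
    congr! 3 <;> ext i <;> simp [and_assoc]
  · rw [Fintype.card_fin]

/-- Given `σ ∈ S_n` at distance `s` from the identity, the number of permutations `τ`
at distance `t` from the identity sharing exactly `m` deranged positions with `σ`, on
exactly `r` of which `σ` and `τ` agree, is at most
`C(s,m)·C(m,r)·C(n−s, t−m)·(t−r)!`. -/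
theorem count_tau_with_parameters (n : ℕ) (hn : 1 ≤ n) (σ : Equiv.Perm (Fin n))
    (s t m r : ℕ) (hs : permHammingDist 1 σ = s)
    (hms : m ≤ s) (hmt : m ≤ t) (hrm : r ≤ m) (htm : t - m ≤ n - s) :
    (Finset.univ.filter fun τ : Equiv.Perm (Fin n) =>
        permHammingDist 1 τ = t ∧
        (Finset.univ.filter fun i => σ i ≠ i ∧ τ i ≠ i).card = m ∧
        (Finset.univ.filter fun i => σ i ≠ i ∧ τ i ≠ i ∧ σ i = τ i).card = r).card ≤
      Nat.choose s m * Nat.choose m r * Nat.choose (n - s) (t - m) *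
        Nat.factorial (t - r) :=
  count_tau_with_parameters_general n σ s t m r hs
end

section
/- Fix n and d with 1 ≤ d ≤ n, and define g(s,t,m,r) = C(n,s)·D_s·C(s,m)·C(m,r)·C(n−s, t−m)·(t−r)!. Then the number of edges of the subgraph of G_{n,d} induced by the neighborhood of the identity permutation is at most Σ_{s=1}^{d−1} Σ_{t=1}^{d−1} Σ_{m=⌈(s+t−d)/2⌉⁺}^{min(s,t)} Σ_{r=⌈s+t−m−d⌉⁺}^{m} g(s,t,m,r), where ⌈x⌉⁺ denotes the smallest nonnegative integer k with k ≥ x. -/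
/-- The graph `G_{n,d}` on `S_n`: two permutations are adjacent iff their Hamming
distance is between `1` and `d − 1`. -/
def permGraph (n d : ℕ) : SimpleGraph (Equiv.Perm (Fin n)) where
  Adj σ τ := 1 ≤ permHammingDist σ τ ∧ permHammingDist σ τ ≤ d - 1
  symm := by
    constructor
    intro σ τ h
    have key : permHammingDist τ σ = permHammingDist σ τ := by
      unfold permHammingDist
      congr 1
      ext i
      simp [ne_comm]
    rw [key]
    exact h
  loopless := by
    constructor
    intro σ h
    have key : permHammingDist σ σ = 0 := by simp [permHammingDist]
    rw [key] at h
    omega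

instance (n d : ℕ) : DecidableRel (permGraph n d).Adj := fun σ τ =>
  inferInstanceAs (Decidable (1 ≤ permHammingDist σ τ ∧ permHammingDist σ τ ≤ d - 1))

/-- The number of edges of the subgraph of `G` induced by the neighborhood of `v`,
i.e. the number of edges of `G` both of whose endpoints are adjacent to `v`. -/
def nbrEdges {α : Type*} [Fintype α] [DecidableEq α]
    (G : SimpleGraph α) [DecidableRel G.Adj] (v : α) : ℕ :=
  (G.edgeFinset.filter fun e => ∀ x ∈ e, G.Adj v x).card

/-- The counting function `g(s,t,m,r) = C(n,s)·D_s·C(s,m)·C(m,r)·C(n−s,t−m)·(t−r)!`. -/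
def g (n s t m r : ℕ) : ℕ :=
  Nat.choose n s * numDerangements s * Nat.choose s m * Nat.choose m r *
    Nat.choose (n - s) (t - m) * Nat.factorial (t - r)

/-!
An edge `{σ, τ}` inside the neighbourhood of the identity is recorded by an ordered pair and
classified by its profile `(s, t, m, r)`: the sizes of `supp σ`, `supp τ`, of the common support
`supp σ ∩ supp τ`, and of the set of common points where `σ` and `τ` agree. Then
`d(1, σ) = s`, `d(1, τ) = t` and `d(σ, τ) = s + t - m - r`, which confines the profile to the
range of summation. A pair of a given profile is determined by `supp σ` (`C(n,s)` choices), a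
derangement of it (`D_s`), the common support inside `supp σ` (`C(s,m)`), the agreement set inside
that (`C(m,r)`), the rest of `supp τ` outside `supp σ` (`C(n-s,t-m)`), and finally the values of
`τ` off the agreement set, an injection of `t - r` points into `t - r` points (`(t-r)!`).
-/

open Finset Equiv
open scoped Nat

section Counting

variable {α : Type*} [Fintype α] [DecidableEq α]

theorem card_filter_support_eq (S : Finset α) :
    #{π : Perm α | π.support = S} = numDerangements #S := by
  rw [← Fintype.card_coe S, ← card_derangements_eq_numDerangements,
    Fintype.card_congr (derangements.subtypeEquiv (· ∈ S)), Fintype.card_subtype]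
  congr 1
  ext π
  simp only [mem_filter, mem_univ, true_and, Finset.ext_iff, Perm.mem_support,
    Function.mem_fixedPoints, Function.IsFixedPt, ne_eq]
  exact ⟨fun h a => by rw [← h, not_not], fun h a => by rw [← not_iff_not, h, not_not]⟩

theorem card_filter_card_support_le (s : ℕ) :
    #{π : Perm α | #π.support = s} ≤ (Fintype.card α).choose s * numDerangements s := by
  calc #{π : Perm α | #π.support = s}
      ≤ numDerangements s * #(univ.powersetCard s : Finset (Finset α)) :=
        card_le_mul_card_image_of_maps_to (fun π hπ => by simpa using hπ) _ fun S hS => by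
          rw [← (mem_powersetCard.1 hS).2, ← card_filter_support_eq]
          exact card_le_card fun π => by simp +contextual
    _ = _ := by rw [card_powersetCard, card_univ, mul_comm]

theorem card_le_factorial_of_eqOn (π₀ : Perm α) {B : Finset α} (hB : B ⊆ π₀.support)
    (Q : Finset (Perm α)) (hQ : ∀ π ∈ Q, π.support = π₀.support ∧ ∀ i ∈ B, π i = π₀ i) :
    #Q ≤ (#π₀.support - #B)! := by
  have hπ₀B : B.image π₀ ⊆ π₀.support := by
    simpa [image_subset_iff] using fun i hi => hB hi
  have hcard :
      Fintype.card (↥(π₀.support \ B) ↪ ↥(π₀.support \ B.image π₀)) = (#π₀.support - #B)! := by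
    rw [Fintype.card_embedding_eq, Fintype.card_coe, Fintype.card_coe, card_sdiff_of_subset hB,
      card_sdiff_of_subset hπ₀B, card_image_of_injective _ π₀.injective, Nat.descFactorial_self]
  rw [← hcard, ← Fintype.card_coe Q]
  refine Fintype.card_le_of_injective
    (fun π => ⟨fun x => ⟨π.1 x, mem_sdiff.2 ⟨?_, ?_⟩⟩, fun x y h => ?_⟩) fun π π' h => ?_
  · have hx : (x : α) ∈ π.1.support := by rw [(hQ π π.2).1]; exact (mem_sdiff.1 x.2).1
    simpa only [(hQ π π.2).1] using Perm.apply_mem_support.2 hx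
  · simp only [mem_image, not_exists, not_and]
    intro b hb hπb
    rw [← (hQ π π.2).2 b hb, π.1.injective.eq_iff] at hπb
    exact (mem_sdiff.1 x.2).2 (hπb ▸ hb)
  · exact Subtype.ext (π.1.injective (congrArg Subtype.val h))
  · refine Subtype.ext (Perm.ext fun i => ?_)
    by_cases hiB : i ∈ B
    · rw [(hQ π π.2).2 i hiB, (hQ π' π'.2).2 i hiB]
    by_cases hiU : i ∈ π₀.support
    · exact congrArg Subtype.val (DFunLike.congr_fun h ⟨i, mem_sdiff.2 ⟨hiU, hiB⟩⟩)
    · have fixed : ∀ π ∈ Q, π i = i := fun π hπ => Perm.notMem_support.1 ((hQ π hπ).1 ▸ hiU)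
      rw [fixed π π.2, fixed π' π'.2]

def agreeSet (σ τ : Perm α) : Finset α := {i ∈ σ.support ∩ τ.support | σ i = τ i}

theorem agreeSet_subset (σ τ : Perm α) : agreeSet σ τ ⊆ σ.support ∩ τ.support :=
  filter_subset _ _

theorem card_le_of_supportInter_eq_of_agreeSet_eq (σ : Perm α) {A B : Finset α} {t : ℕ}
    (Q : Finset (Perm α))
    (hQ : ∀ τ ∈ Q, #τ.support = t ∧ σ.support ∩ τ.support = A ∧ agreeSet σ τ = B) :
    #Q ≤ (Fintype.card α - #σ.support).choose (t - #A) * (t - #B)! := by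
  calc #Q ≤ (t - #B)! * #(σ.supportᶜ.powersetCard (t - #A)) :=
        card_le_mul_card_image_of_maps_to (f := fun τ => τ.support \ σ.support)
          (fun τ hτ => mem_powersetCard.2 ⟨fun i hi => mem_compl.2 (mem_sdiff.1 hi).2, by
            rw [card_sdiff, (hQ τ hτ).1, (hQ τ hτ).2.1]⟩) _ fun C _ => ?_
    _ = _ := by rw [card_powersetCard, card_compl, mul_comm]
  obtain hF | ⟨τ₀, hτ₀⟩ := {τ ∈ Q | τ.support \ σ.support = C}.eq_empty_or_nonempty
  · simp [hF]
  have support_eq : ∀ τ ∈ Q, τ.support \ σ.support = C → τ.support = A ∪ C := by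
    intro τ hτ hC
    rw [← hC, ← (hQ τ hτ).2.1, inter_comm]
    exact (sup_inf_sdiff _ _).symm
  have agree : ∀ τ ∈ Q, ∀ i ∈ B, τ i = σ i := by
    intro τ hτ i hi
    rw [← (hQ τ hτ).2.2] at hi
    exact ((mem_filter.1 hi).2).symm
  obtain ⟨hτ₀Q, hτ₀C⟩ := mem_filter.1 hτ₀
  have hB : B ⊆ τ₀.support := by
    rw [← (hQ τ₀ hτ₀Q).2.2]
    exact (agreeSet_subset σ τ₀).trans inter_subset_right
  calc _ ≤ (#τ₀.support - #B)! := card_le_factorial_of_eqOn τ₀ hB _ fun τ hτ => by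
        obtain ⟨hτQ, hτC⟩ := mem_filter.1 hτ
        refine ⟨by rw [support_eq τ hτQ hτC, support_eq τ₀ hτ₀Q hτ₀C], fun i hi => ?_⟩
        rw [agree τ hτQ i hi, agree τ₀ hτ₀Q i hi]
    _ = (t - #B)! := by rw [(hQ τ₀ hτ₀Q).1]

theorem card_le_of_supportInter_eq (σ : Perm α) {A : Finset α} {t r : ℕ} (Q : Finset (Perm α))
    (hQ : ∀ τ ∈ Q, #τ.support = t ∧ σ.support ∩ τ.support = A ∧ #(agreeSet σ τ) = r) :
    #Q ≤ (#A).choose r * (Fintype.card α - #σ.support).choose (t - #A) * (t - r)! := by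
  calc #Q ≤ ((Fintype.card α - #σ.support).choose (t - #A) * (t - r)!) * #(A.powersetCard r) :=
        card_le_mul_card_image_of_maps_to (f := agreeSet σ)
          (fun τ hτ => mem_powersetCard.2 ⟨(hQ τ hτ).2.1 ▸ agreeSet_subset σ τ, (hQ τ hτ).2.2⟩) _
          fun B hB => ?_
    _ = _ := by rw [card_powersetCard]; ring
  rw [← (mem_powersetCard.1 hB).2]
  exact card_le_of_supportInter_eq_of_agreeSet_eq σ _ fun τ hτ =>
    ⟨(hQ τ (mem_filter.1 hτ).1).1, (hQ τ (mem_filter.1 hτ).1).2.1, (mem_filter.1 hτ).2⟩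

theorem card_le_of_card_supportInter_eq (σ : Perm α) {t m r : ℕ} (Q : Finset (Perm α))
    (hQ : ∀ τ ∈ Q, #τ.support = t ∧ #(σ.support ∩ τ.support) = m ∧ #(agreeSet σ τ) = r) :
    #Q ≤ (#σ.support).choose m * m.choose r * (Fintype.card α - #σ.support).choose (t - m) *
      (t - r)! := by
  calc #Q ≤ (m.choose r * (Fintype.card α - #σ.support).choose (t - m) * (t - r)!) *
        #(σ.support.powersetCard m) :=
        card_le_mul_card_image_of_maps_to (f := fun τ => σ.support ∩ τ.support)
          (fun τ hτ => mem_powersetCard.2 ⟨inter_subset_left, (hQ τ hτ).2.1⟩) _ fun A hA => ?_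
    _ = _ := by rw [card_powersetCard]; ring
  rw [← (mem_powersetCard.1 hA).2]
  exact card_le_of_supportInter_eq σ _ fun τ hτ =>
    ⟨(hQ τ (mem_filter.1 hτ).1).1, (mem_filter.1 hτ).2, (hQ τ (mem_filter.1 hτ).1).2.2⟩

theorem card_pairs_le_g {s t m r : ℕ} (Q : Finset (Perm α × Perm α))
    (hQ : ∀ p ∈ Q, #p.1.support = s ∧ #p.2.support = t ∧ #(p.1.support ∩ p.2.support) = m ∧
      #(agreeSet p.1 p.2) = r) :
    #Q ≤ g (Fintype.card α) s t m r := by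
  calc #Q ≤ (s.choose m * m.choose r * (Fintype.card α - s).choose (t - m) * (t - r)!) *
        #{σ : Perm α | #σ.support = s} :=
        card_le_mul_card_image_of_maps_to (f := Prod.fst)
          (fun p hp => mem_filter.2 ⟨mem_univ _, (hQ p hp).1⟩) _ fun σ hσ => ?_
    _ ≤ _ * ((Fintype.card α).choose s * numDerangements s) :=
        Nat.mul_le_mul_left _ (card_filter_card_support_le s)
    _ = g (Fintype.card α) s t m r := by unfold g; ring
  have hfst : ∀ p ∈ {p ∈ Q | p.1 = σ}, p.1 = σ := fun p hp => (mem_filter.1 hp).2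
  rw [← card_image_of_injOn (f := Prod.snd) fun p hp q hq h =>
    Prod.ext ((hfst p hp).trans (hfst q hq).symm) h, ← (mem_filter.1 hσ).2]
  refine card_le_of_card_supportInter_eq σ _ fun τ hτ => ?_
  obtain ⟨p, hp, rfl⟩ := mem_image.1 hτ
  obtain ⟨hpQ, rfl⟩ := mem_filter.1 hp
  exact (hQ p hpQ).2

end Counting

theorem permHammingDist_one_left {n : ℕ} (σ : Perm (Fin n)) :
    permHammingDist 1 σ = #σ.support := by
  simp only [permHammingDist, Perm.one_apply, Perm.support, ne_comm]
  congr

theorem permHammingDist_add_card_agreeSet {n : ℕ} (σ τ : Perm (Fin n)) :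
    permHammingDist σ τ + #(agreeSet σ τ) + #(σ.support ∩ τ.support) =
      #σ.support + #τ.support := by
  have hdiff : ({i | σ i ≠ τ i} : Finset (Fin n)) = (σ.support ∪ τ.support) \ agreeSet σ τ := by
    ext i
    simp only [agreeSet, mem_filter, mem_univ, true_and, mem_sdiff, mem_union, mem_inter,
      Perm.mem_support]
    grind
  have hsub : agreeSet σ τ ⊆ σ.support ∪ τ.support := (agreeSet_subset σ τ).trans inter_subset_union
  rw [permHammingDist, hdiff, card_sdiff_of_subset hsub, Nat.sub_add_cancel (card_le_card hsub),
    card_union_add_card_inter]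

theorem profile_mem_of_adj {n d : ℕ} {σ τ : Perm (Fin n)}
    (h : (permGraph n d).Adj σ τ ∧ (permGraph n d).Adj 1 σ ∧ (permGraph n d).Adj 1 τ) :
    #σ.support ∈ Icc 1 (d - 1) ∧ #τ.support ∈ Icc 1 (d - 1) ∧
      #(σ.support ∩ τ.support) ∈
        Icc ((#σ.support + #τ.support - d + 1) / 2) (min #σ.support #τ.support) ∧
      #(agreeSet σ τ) ∈
        Icc (#σ.support + #τ.support - #(σ.support ∩ τ.support) - d) #(σ.support ∩ τ.support) := by
  simp only [permGraph, permHammingDist_one_left] at h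
  have hdist := permHammingDist_add_card_agreeSet σ τ
  have hagree := card_le_card (agreeSet_subset σ τ)
  have hleft := card_le_card (inter_subset_left (s₁ := σ.support) (s₂ := τ.support))
  have hright := card_le_card (inter_subset_right (s₁ := σ.support) (s₂ := τ.support))
  simp only [mem_Icc]
  omega

theorem card_le_sum_of_mapsTo {ι M : Type*} [DecidableEq M] {s : Finset ι} {t : Finset M}
    (f : ι → M) (hf : ∀ i ∈ s, f i ∈ t) {b : M → ℕ} (hb : ∀ j ∈ t, #{i ∈ s | f i = j} ≤ b j) :
    #s ≤ ∑ j ∈ t, b j :=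
  (card_eq_sum_card_fiberwise hf).trans_le (sum_le_sum hb)

theorem nbrEdges_le_card_adj_pairs {V : Type*} [Fintype V] [DecidableEq V] (G : SimpleGraph V)
    [DecidableRel G.Adj] (v : V) :
    nbrEdges G v ≤ #{p : V × V | G.Adj p.1 p.2 ∧ G.Adj v p.1 ∧ G.Adj v p.2} := by
  refine card_le_card_of_surjOn (fun p => s(p.1, p.2)) fun e he => ?_
  induction e using Sym2.ind with
  | h x y =>
    simp only [coe_filter, SimpleGraph.mem_edgeFinset, Set.mem_ofPred_eq, SimpleGraph.mem_edgeSet,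
      Sym2.mem_iff, forall_eq_or_imp, forall_eq] at he
    exact ⟨(x, y), by simpa using he, rfl⟩

/-- `⌈(s+t−d)/2⌉⁺` and `⌈s+t−m−d⌉⁺` appear as `(s + t - d + 1) / 2` and `s + t - m - d` in
truncated subtraction. -/
theorem nbrEdges_identity_le_sum_general (n d : ℕ) :
    nbrEdges (permGraph n d) 1 ≤
      ∑ s ∈ Finset.Icc 1 (d - 1), ∑ t ∈ Finset.Icc 1 (d - 1),
        ∑ m ∈ Finset.Icc ((s + t - d + 1) / 2) (min s t),
          ∑ r ∈ Finset.Icc (s + t - m - d) m, g n s t m r := by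
  refine (nbrEdges_le_card_adj_pairs _ _).trans ?_
  refine card_le_sum_of_mapsTo (fun p => #p.1.support)
    (fun p hp => (profile_mem_of_adj (mem_filter.1 hp).2).1) fun s _ => ?_
  refine card_le_sum_of_mapsTo (fun p => #p.2.support) (fun p hp => ?_) fun t _ => ?_
  · simp only [mem_filter, mem_univ, true_and] at hp
    obtain ⟨hadj, rfl⟩ := hp
    exact (profile_mem_of_adj hadj).2.1
  refine card_le_sum_of_mapsTo (fun p => #(p.1.support ∩ p.2.support)) (fun p hp => ?_)
    fun m _ => ?_
  · simp only [mem_filter, mem_univ, true_and] at hp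
    obtain ⟨⟨hadj, rfl⟩, rfl⟩ := hp
    exact (profile_mem_of_adj hadj).2.2.1
  refine card_le_sum_of_mapsTo (fun p => #(agreeSet p.1 p.2)) (fun p hp => ?_) fun r _ => ?_
  · simp only [mem_filter, mem_univ, true_and] at hp
    obtain ⟨⟨⟨hadj, rfl⟩, rfl⟩, rfl⟩ := hp
    exact (profile_mem_of_adj hadj).2.2.2
  simpa using card_pairs_le_g (α := Fin n) _ fun p hp => by
    simp only [mem_filter] at hp
    exact ⟨hp.1.1.1.2, hp.1.1.2, hp.1.2, hp.2⟩

/-- The number of edges of the subgraph of `G_{n,d}` induced by the neighborhood of the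
identity permutation is at most
`Σ_{s=1}^{d−1} Σ_{t=1}^{d−1} Σ_{m=⌈(s+t−d)/2⌉⁺}^{min(s,t)} Σ_{r=⌈s+t−m−d⌉⁺}^{m} g(s,t,m,r)`,
where `⌈x⌉⁺` is the smallest nonnegative integer `k ≥ x` (here realized via truncated
natural subtraction, so that `⌈(s+t−d)/2⌉⁺ = (s+t−d+1)/2` and `⌈s+t−m−d⌉⁺ = s+t−m−d`). -/
theorem nbrEdges_identity_le_sum (n d : ℕ) (hd : 1 ≤ d) (hdn : d ≤ n) :
    nbrEdges (permGraph n d) 1 ≤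
      ∑ s ∈ Finset.Icc 1 (d - 1), ∑ t ∈ Finset.Icc 1 (d - 1),
        ∑ m ∈ Finset.Icc ((s + t - d + 1) / 2) (min s t),
          ∑ r ∈ Finset.Icc (s + t - m - d) m, g n s t m r :=
  nbrEdges_identity_le_sum_general n d
end

section
/- (Lemma 7.) Fix a real δ with 0 < δ < 1/2 and a real ε with 0 < ε < 1/6. Define g(s,t,m,r) = C(n,s)·D_s·C(s,m)·C(m,r)·C(n−s, t−m)·(t−r)!. Then there exists N such that for all n ≥ N for which d := δ·n is a positive integer, and for all integers s,t,m,r satisfying 1 ≤ s ≤ d, 1 ≤ t ≤ d, ⌈(s+t−d)/2⌉⁺ ≤ m ≤ min(s,t), and ⌈s+t−m−d⌉⁺ ≤ r ≤ m, one has g(s,t,m,r) ≤ g(d,d,d,0) · 2^{3·n·h₂(3ε)}, where h₂(x) = −x·log₂ x − (1−x)·log₂(1−x) is the binary entropy function. -/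
/-- The binary entropy function `h₂(x) = −x·log₂ x − (1−x)·log₂(1−x)`. -/
noncomputable def binEntropy (x : ℝ) : ℝ :=
  -x * Real.logb 2 x - (1 - x) * Real.logb 2 (1 - x)

open Nat

theorem mul_numDerangements_le_succ (j : ℕ) :
    j * numDerangements j ≤ numDerangements (j + 1) := by
  cases j with
  | zero => simp
  | succ i =>
    rw [numDerangements_add_two]
    exact Nat.mul_le_mul_left _ (Nat.le_add_left _ _)

theorem numDerangements_mul_factorial_pred_le {s d : ℕ} (hs : 1 ≤ s) (hsd : s ≤ d) :
    numDerangements s * (d - 1)! ≤ numDerangements d * (s - 1)! := by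
  induction d, hsd using Nat.le_induction with
  | base => rfl
  | succ d hsd ih =>
    obtain ⟨e, rfl⟩ : ∃ e, d = e + 1 := ⟨d - 1, by omega⟩
    simp only [Nat.add_sub_cancel] at ih ⊢
    calc numDerangements s * (e + 1)! = (e + 1) * (numDerangements s * e !) := by
          rw [factorial_succ]; ring
      _ ≤ (e + 1) * (numDerangements (e + 1) * (s - 1)!) := Nat.mul_le_mul_left _ ih
      _ = ((e + 1) * numDerangements (e + 1)) * (s - 1)! := by ring
      _ ≤ numDerangements (e + 1 + 1) * (s - 1)! :=
          Nat.mul_le_mul_right _ (mul_numDerangements_le_succ _)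

theorem descFactorial_mul_pow_sub_le (n : ℕ) {s d : ℕ} (hsd : s ≤ d) :
    n.descFactorial s * (n - d) ^ (d - s) ≤ n.descFactorial d := by
  rw [← descFactorial_mul_descFactorial hsd, mul_comm]
  gcongr
  calc (n - d) ^ (d - s) ≤ (n - s + 1 - (d - s)) ^ (d - s) := Nat.pow_le_pow_left (by omega) _
    _ ≤ (n - s).descFactorial (d - s) := pow_sub_le_descFactorial _ _

theorem choose_mul_factorial_mul_factorial_le {m r t : ℕ} (hmt : m ≤ t) (hrm : r ≤ m) :
    m.choose r * r ! * (t - r)! ≤ t ! :=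
  calc m.choose r * r ! * (t - r)! ≤ t.choose r * r ! * (t - r)! := by
        gcongr
    _ = t ! := choose_mul_factorial_mul_factorial (hrm.trans hmt)

theorem choose_mul_factorial_add_mul_factorial_le {s d b j k : ℕ} (hsd : s ≤ d) (hkb : k ≤ b)
    (hbj : b + j ≤ d) : s.choose b * (j + k)! * k ! ≤ d ! * d ^ k := by
  have hjk : (j + k)! ≤ (d - b)! * d ^ k :=
    calc (j + k)! = (j + k - k)! * (j + k).descFactorial k :=
          (factorial_mul_descFactorial le_add_self).symm
      _ ≤ (d - b)! * (j + k) ^ k :=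
          Nat.mul_le_mul (factorial_le (by omega)) (descFactorial_le_pow _ _)
      _ ≤ (d - b)! * d ^ k := by gcongr; omega
  calc s.choose b * (j + k)! * k ! ≤ d.choose b * ((d - b)! * d ^ k) * b ! := by
        gcongr
    _ = d.choose b * b ! * (d - b)! * d ^ k := by ring
    _ = d ! * d ^ k := by rw [choose_mul_factorial_mul_factorial (by omega)]

theorem two_pow_le_two_mul_factorial : ∀ j : ℕ, 2 ^ j ≤ 2 * j !
  | 0 => by norm_num
  | 1 => by norm_num
  | j + 2 => by
    have ih := two_pow_le_two_mul_factorial (j + 1)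
    rw [pow_succ, factorial_succ (j + 1)]
    nlinarith

theorem choose_add_mul_factorial_le {N x : ℕ} (j k : ℕ) (hN : N ≤ 2 * x) :
    N.choose (j + k) * k ! ≤ 2 * x ^ j * N ^ k := by
  have hdvd : k ! * j ! ∣ (j + k)! := by
    rw [add_comm]; exact factorial_mul_factorial_dvd_factorial_add k j
  refine Nat.le_of_mul_le_mul_right ?_ (factorial_pos j)
  calc N.choose (j + k) * k ! * j ! ≤ N.choose (j + k) * (j + k)! := by
        rw [mul_assoc]; gcongr; exact le_of_dvd (factorial_pos _) hdvd
    _ = N.descFactorial (j + k) := by rw [descFactorial_eq_factorial_mul_choose, mul_comm]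
    _ ≤ N ^ j * N ^ k := (descFactorial_le_pow _ _).trans_eq (pow_add _ _ _)
    _ ≤ 2 ^ j * x ^ j * N ^ k := by rw [← mul_pow]; gcongr
    _ ≤ 2 * j ! * x ^ j * N ^ k := by gcongr; exact two_pow_le_two_mul_factorial j
    _ = 2 * x ^ j * N ^ k * j ! := by ring

theorem g_mul_factorial_pow_three_le {n d s t m r : ℕ} (h2d : 2 * d ≤ n) (hs : 1 ≤ s)
    (hsd : s ≤ d) (htd : t ≤ d) (hms : m ≤ s) (hmt : m ≤ t) (hr : s + t - m - d ≤ r)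
    (hrm : r ≤ m) :
    g n s t m r * (s + t - m - d)! ^ 3 ≤ g n d d d 0 * (2 * d) * (d * n) ^ (s + t - m - d) := by
  set k := s + t - m - d
  have hd : d ≠ 0 := by omega
  have hfalling := descFactorial_mul_pow_sub_le n hsd
  rw [descFactorial_eq_factorial_mul_choose, descFactorial_eq_factorial_mul_choose] at hfalling
  have hchoose : s.choose m * t ! * k ! ≤ d ! * d ^ k := by
    have h := choose_mul_factorial_add_mul_factorial_le (j := t - k) hsd
      (show k ≤ s - m by omega) (by omega)
    rwa [Nat.sub_add_cancel (by omega), choose_symm hms] at h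
  have houtside : (n - s).choose (t - m) * k ! ≤ 2 * (n - d) ^ (d - s) * n ^ k := by
    have h := choose_add_mul_factorial_le (N := n - s) (x := n - d) (t - m - k) k (by omega)
    rw [Nat.sub_add_cancel (by omega)] at h
    refine h.trans (Nat.mul_le_mul (Nat.mul_le_mul_left _ ?_) (Nat.pow_le_pow_left (by omega) _))
    exact Nat.pow_le_pow_right (by omega) (by omega)
  have hpos : 0 < (s - 1)! * (n - d) ^ (d - s) * (d - 1)! := by
    have : 0 < n - d := by omega
    positivity
  refine Nat.le_of_mul_le_mul_right ?_ hpos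
  calc g n s t m r * k ! ^ 3 * ((s - 1)! * (n - d) ^ (d - s) * (d - 1)!)
      = g n s t m r * ((s - 1)! * (n - d) ^ (d - s) * (d - 1)! * k ! * k ! * k !) := by ring
    _ ≤ g n s t m r * (s ! * (n - d) ^ (d - s) * (d - 1)! * r ! * k ! * k !) := by
        gcongr; omega
    _ = (s ! * n.choose s * (n - d) ^ (d - s)) * (numDerangements s * (d - 1)!) *
          (m.choose r * r ! * (t - r)!) * s.choose m * k ! * ((n - s).choose (t - m) * k !) := by
        simp only [g]; ring
    _ ≤ (d ! * n.choose d) * (numDerangements d * (s - 1)!) * t ! * s.choose m * k ! *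
          (2 * (n - d) ^ (d - s) * n ^ k) := by
        have hder := numDerangements_mul_factorial_pred_le hs hsd
        have hprod := choose_mul_factorial_mul_factorial_le hmt hrm
        gcongr ?_ * ?_ * ?_ * _ * _ * ?_
    _ = (d ! * n.choose d) * (numDerangements d * (s - 1)!) * (s.choose m * t ! * k !) *
          (2 * (n - d) ^ (d - s) * n ^ k) := by ring
    _ ≤ (d ! * n.choose d) * (numDerangements d * (s - 1)!) * (d ! * d ^ k) *
          (2 * (n - d) ^ (d - s) * n ^ k) := by gcongr
    _ = g n d d d 0 * (2 * d) * (d * n) ^ k * ((s - 1)! * (n - d) ^ (d - s) * (d - 1)!) := by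
        simp only [g, choose_self, choose_zero_right, Nat.sub_self, Nat.sub_zero]
        rw [← mul_factorial_pred hd]
        ring

section Asymptotics

open Filter Asymptotics Real

theorem isLittleO_rpow_id_atTop {p : ℝ} (hp : p < 1) : (fun x : ℝ => x ^ p) =o[atTop] id := by
  refine (isLittleO_iff_tendsto' ?_).mpr ?_
  · filter_upwards [eventually_gt_atTop 0] with x hx h
    exact absurd h hx.ne'
  · refine (tendsto_rpow_neg_atTop (y := 1 - p) (by linarith)).congr' ?_
    filter_upwards [eventually_gt_atTop 0] with x hx
    rw [id, ← rpow_sub_one hx.ne', neg_sub]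

theorem eventually_mul_exp_rpow_le_exp {p : ℝ} (hp : p < 1) {a : ℝ} (ha : 0 < a) (b : ℝ)
    {c : ℝ} (hc : 0 < c) : ∀ᶠ x in atTop, a * x * exp (b * x ^ p) ≤ exp (c * x) := by
  have hf : (fun x : ℝ => log a + log x + b * x ^ p) =o[atTop] id :=
    ((isLittleO_const_id_atTop _).add isLittleO_log_id_atTop).add
      ((isLittleO_rpow_id_atTop hp).const_mul_left b)
  filter_upwards [hf.bound hc, eventually_gt_atTop 0] with x hle hx
  rw [norm_eq_abs, norm_eq_abs, id, abs_of_pos hx] at hle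
  calc a * x * exp (b * x ^ p) = exp (log a + log x + b * x ^ p) := by
        rw [exp_add, exp_add, exp_log ha, exp_log hx]
    _ ≤ exp (c * x) := exp_le_exp.mpr ((le_abs_self _).trans hle)

theorem pow_two_mul_le_factorial_pow_three_mul_exp {x : ℝ} (hx : 0 ≤ x) (k : ℕ) :
    x ^ (2 * k) ≤ (k ! : ℝ) ^ 3 * exp (3 * x ^ (2 / 3 : ℝ)) := by
  set y := x ^ (2 / 3 : ℝ)
  have hy : 0 ≤ y := rpow_nonneg hx _
  have hyk : y ^ k ≤ k ! * exp y := by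
    have h := pow_div_factorial_le_exp _ hy k
    rwa [div_le_iff₀ (by positivity), mul_comm] at h
  have hxy : x ^ 2 = y ^ 3 := by
    rw [← rpow_natCast y 3, ← rpow_mul hx]; norm_num
  calc x ^ (2 * k) = (y ^ k) ^ 3 := by rw [pow_mul, hxy, ← pow_mul, ← pow_mul, mul_comm]
    _ ≤ (k ! * exp y) ^ 3 := by gcongr
    _ = (k ! : ℝ) ^ 3 * exp (3 * y) := by rw [mul_pow, ← exp_nat_mul]; push_cast; ring

end Asymptotics

theorem g_le_mul_exp {n d s t m r : ℕ} (h2d : 2 * d ≤ n) (hs : 1 ≤ s) (hsd : s ≤ d)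
    (htd : t ≤ d) (hms : m ≤ s) (hmt : m ≤ t) (hr : s + t - m - d ≤ r) (hrm : r ≤ m) :
    (g n s t m r : ℝ) ≤ g n d d d 0 * (2 * n * Real.exp (3 * (n : ℝ) ^ (2 / 3 : ℝ))) := by
  have hg := g_mul_factorial_pow_three_le h2d hs hsd htd hms hmt hr hrm
  set k := s + t - m - d
  have hdn : (d : ℝ) ≤ n := by exact_mod_cast (show d ≤ n by omega)
  refine le_of_mul_le_mul_right ?_ (by positivity : (0 : ℝ) < (k ! : ℝ) ^ 3)
  calc (g n s t m r : ℝ) * (k ! : ℝ) ^ 3 ≤ g n d d d 0 * (2 * d) * (d * n) ^ k := by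
        exact_mod_cast hg
    _ ≤ g n d d d 0 * (2 * n) * (n : ℝ) ^ (2 * k) := by
        rw [pow_mul, sq]; gcongr
    _ ≤ g n d d d 0 * (2 * n) * ((k ! : ℝ) ^ 3 * Real.exp (3 * (n : ℝ) ^ (2 / 3 : ℝ))) := by
        gcongr; exact pow_two_mul_le_factorial_pow_three_mul_exp n.cast_nonneg k
    _ = _ := by ring

theorem binEntropy_pos {x : ℝ} (h0 : 0 < x) (h1 : x < 1) : 0 < binEntropy x := by
  have h : binEntropy x = Real.binEntropy x / Real.log 2 := by
    simp only [binEntropy, Real.binEntropy, Real.logb, Real.log_inv]; ring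
  rw [h]
  exact div_pos (Real.binEntropy_pos h0 h1) (Real.log_pos one_lt_two)

theorem lemma7_general (δ ε : ℝ) (hδ1 : δ < 1 / 2)
    (hε0 : 0 < ε) (hε1 : ε < 1 / 6) :
    ∃ N : ℕ, ∀ n : ℕ, N ≤ n → ∀ d : ℕ, 0 < d → (d : ℝ) = δ * n →
      ∀ s t m r : ℕ,
        1 ≤ s → s ≤ d → 1 ≤ t → t ≤ d →
        (s + t - d + 1) / 2 ≤ m → m ≤ min s t →
        s + t - m - d ≤ r → r ≤ m →
        (g n s t m r : ℝ) ≤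
          (g n d d d 0 : ℝ) * 2 ^ (3 * (n : ℝ) * binEntropy (3 * ε)) := by
  have hc : 0 < Real.log 2 * (3 * binEntropy (3 * ε)) := by
    have := binEntropy_pos (x := 3 * ε) (by linarith) (by linarith)
    have := Real.log_pos one_lt_two
    positivity
  obtain ⟨N, hN⟩ := Filter.eventually_atTop.mp <| tendsto_natCast_atTop_atTop.eventually <|
    eventually_mul_exp_rpow_le_exp (p := 2 / 3) (by norm_num) two_pos 3 hc
  refine ⟨N, fun n hn d _ hdn s t m r hs hsd _ htd _ hm hr hrm => ?_⟩
  have h2d : 2 * d ≤ n := by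
    have : (2 * d : ℝ) ≤ n := by rw [hdn]; nlinarith [n.cast_nonneg (α := ℝ)]
    exact_mod_cast this
  calc (g n s t m r : ℝ)
      ≤ g n d d d 0 * (2 * n * Real.exp (3 * (n : ℝ) ^ (2 / 3 : ℝ))) :=
        g_le_mul_exp h2d hs hsd htd (hm.trans (min_le_left _ _)) (hm.trans (min_le_right _ _))
          hr hrm
    _ ≤ g n d d d 0 * 2 ^ (3 * (n : ℝ) * binEntropy (3 * ε)) := by
        gcongr
        rw [Real.rpow_def_of_pos two_pos]
        refine (hN n hn).trans_eq ?_
        ring_nf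

/-- Lemma 7: for fixed `0 < δ < 1/2` and `0 < ε < 1/6`, for all sufficiently large `n`
with `d = δn` a positive integer, and all `s,t,m,r` in the admissible ranges (with
`⌈x⌉⁺`, the smallest nonnegative integer `≥ x`, realized via truncated natural
subtraction), one has `g(s,t,m,r) ≤ g(d,d,d,0) · 2^{3n·h₂(3ε)}`. -/
theorem lemma7 (δ ε : ℝ) (hδ0 : 0 < δ) (hδ1 : δ < 1 / 2)
    (hε0 : 0 < ε) (hε1 : ε < 1 / 6) :
    ∃ N : ℕ, ∀ n : ℕ, N ≤ n → ∀ d : ℕ, 0 < d → (d : ℝ) = δ * n →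
      ∀ s t m r : ℕ,
        1 ≤ s → s ≤ d → 1 ≤ t → t ≤ d →
        (s + t - d + 1) / 2 ≤ m → m ≤ min s t →
        s + t - m - d ≤ r → r ≤ m →
        (g n s t m r : ℝ) ≤
          (g n d d d 0 : ℝ) * 2 ^ (3 * (n : ℝ) * binEntropy (3 * ε)) :=
  lemma7_general δ ε hδ1 hε0 hε1
end
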